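/- (Infinitary Splitting Theorem) Let F, G be infinitary propositional formulas over σ and let A_1, A_2 be disjoint sets of atoms such that the partition {A_1, A_2} is infinitely separable on the dependency graph DG_{A_1 ∪ A_2}[F ∧ G]. If A_2 is disjoint from P(F) and A_1 is disjoint from P(G), then for any interpretation I: I is an (A_1 ∪ A_2)-stable model of F ∧ G if and only if I is both an A_1-stable model of F and an A_2-stable model of G. -/

import Mathlib

/-- Infinitary propositional formulas over signature `σ`:
atoms, conjunctions and disjunctions of (index-)sets of formulas, implication. -/
inductive Formula (σ : Type) : Type 1
  | atom : σ → Formula σ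
  | conj : (ι : Type) → (ι → Formula σ) → Formula σ
  | disj : (ι : Type) → (ι → Formula σ) → Formula σ
  | imp : Formula σ → Formula σ → Formula σ

namespace Formula

variable {σ : Type}

/-- `⊥` is the empty disjunction. -/
def bot : Formula σ := Formula.disj Empty (fun e => e.elim)

/-- Binary conjunction `F ∧ G`. -/
def and (F G : Formula σ) : Formula σ := Formula.conj Bool (fun b => if b then F else G)

/-- Binary disjunction `F ∨ G`. -/
def or (F G : Formula σ) : Formula σ := Formula.disj Bool (fun b => if b then F else G)

/-- Negation `¬F` abbreviates `F → ⊥`. -/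
def neg (F : Formula σ) : Formula σ := Formula.imp F bot

/-- Conjunction of a set of atoms. -/
def conjAtoms (S : Set σ) : Formula σ := Formula.conj S (fun p => Formula.atom p.val)

/-- Satisfaction of an infinitary formula by an interpretation `I ⊆ σ`. -/
def Sat (I : Set σ) : Formula σ → Prop
  | .atom p => p ∈ I
  | .conj _ f => ∀ i, Sat I (f i)
  | .disj _ f => ∃ i, Sat I (f i)
  | .imp F G => Sat I F → Sat I G

open Classical in
/-- The reduct `F^I`. -/
noncomputable def reduct (I : Set σ) : Formula σ → Formula σ
  | .atom p => if p ∈ I then Formula.atom p else bot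
  | .conj ι f => Formula.conj ι (fun i => reduct I (f i))
  | .disj ι f => Formula.disj ι (fun i => reduct I (f i))
  | .imp F G => if Sat I (Formula.imp F G) then Formula.imp (reduct I F) (reduct I G) else bot

/-- `I` is an `A`-stable model of `F`: `I` is minimal w.r.t. `≤_A`
(`J ≤_A I` iff `J ⊆ I` and `I \ J ⊆ A`) among interpretations satisfying `F^I`. -/
def AStable (A : Set σ) (I : Set σ) (F : Formula σ) : Prop :=
  Sat I (reduct I F) ∧ ∀ J : Set σ, J ⊆ I → I \ J ⊆ A → Sat J (reduct I F) → J = I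

/-- A stable model is a `σ`-stable model. -/
def Stable (I : Set σ) (F : Formula σ) : Prop := AStable Set.univ I F

/-- The strictly positive atoms `P(F)`. -/
def spos : Formula σ → Set σ
  | .atom p => {p}
  | .conj _ f => ⋃ i, spos (f i)
  | .disj _ f => ⋃ i, spos (f i)
  | .imp _ H => spos H

/-- `F` is (syntactically) the formula `⊥`, i.e. an empty disjunction. -/
def IsBot : Formula σ → Prop
  | .disj ι _ => IsEmpty ι
  | _ => False

open Classical in
mutual
/-- Positive nonnegated atoms `Pnn(F)`. -/
noncomputable def pnn : Formula σ → Set σ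
  | .atom p => {p}
  | .conj _ f => ⋃ i, pnn (f i)
  | .disj _ f => ⋃ i, pnn (f i)
  | .imp G H => if IsBot H then ∅ else nnn G ∪ pnn H

/-- Negative nonnegated atoms `Nnn(F)`. -/
noncomputable def nnn : Formula σ → Set σ
  | .atom _ => ∅
  | .conj _ f => ⋃ i, nnn (f i)
  | .disj _ f => ⋃ i, nnn (f i)
  | .imp G H => if IsBot H then ∅ else pnn G ∪ nnn H
end

/-- The rules of a formula, as antecedent/consequent pairs. -/
def rules : Formula σ → Set (Formula σ × Formula σ)
  | .atom _ => ∅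
  | .conj _ f => ⋃ i, rules (f i)
  | .disj _ f => ⋃ i, rules (f i)
  | .imp G H => insert (G, H) (rules H)

/-- Edge relation of the positive dependency graph `DG_A[F]` (vertex set `A`). -/
noncomputable def DGEdge (F : Formula σ) (A : Set σ) (p q : σ) : Prop :=
  p ∈ A ∧ q ∈ A ∧ ∃ R ∈ rules F, p ∈ spos R.2 ∧ q ∈ pnn R.1

/-- The atoms occurring in a formula. -/
def atoms : Formula σ → Set σ
  | .atom p => {p}
  | .conj _ f => ⋃ i, atoms (f i)
  | .disj _ f => ⋃ i, atoms (f i)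
  | .imp G H => atoms G ∪ atoms H

/-- `G` is a definition for the set `Q` of atoms: a conjunction of formulas
`H ∧ C^∧ → q` with `q ∈ Q`, `C ⊆ Q`, and no atom of `Q` occurring in `H`. -/
def IsDefinition (Q : Set σ) (G : Formula σ) : Prop :=
  ∃ (ι : Type) (g : ι → Formula σ), G = Formula.conj ι g ∧
    ∀ i, ∃ (H : Formula σ) (C : Set σ) (q : σ),
      q ∈ Q ∧ C ⊆ Q ∧ (∀ p ∈ Q, p ∉ atoms H) ∧
      g i = Formula.imp (Formula.and H (conjAtoms C)) (Formula.atom q)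

end Formula

section Graph

variable {V : Type*}

/-- An infinite walk in the directed graph with edge relation `E`. -/
def IsInfWalk (E : V → V → Prop) (w : ℕ → V) : Prop := ∀ i, E (w i) (w (i + 1))

/-- The partition `{P₁, P₂}` is infinitely separable: every infinite walk
visits `P₁` or `P₂` only finitely often. -/
def InfSeparable (E : V → V → Prop) (P1 P2 : Set V) : Prop :=
  ∀ w : ℕ → V, IsInfWalk E w → {i | w i ∈ P1}.Finite ∨ {i | w i ∈ P2}.Finite

/-- `u` and `v` are in the same strongly connected component:
each is reachable from the other. -/
def SameSCC (E : V → V → Prop) (u v : V) : Prop :=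
  Relation.ReflTransGen E u v ∧ Relation.ReflTransGen E v u

/-- The partition `{P₁, P₂}` is separable: every strongly connected
component is contained in `P₁` or in `P₂`. -/
def Separable (E : V → V → Prop) (P1 P2 : Set V) : Prop :=
  ∀ u v, SameSCC E u v → ((u ∈ P1 ∧ v ∈ P1) ∨ (u ∈ P2 ∧ v ∈ P2))

end Graph

/-!
If `I` is an `(A₁ ∪ A₂)`-stable model of `F ∧ G` and `J ≤_{A₁} I` satisfies `F^I`, then `J` also
satisfies `G^I`: only the strictly positive atoms of `G` matter for models of `G^I` below `I`,
and `A₁` avoids `P(G)`. So `J = I`, and symmetrically for `G`.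

Conversely, let `I` be an `A₁`-stable model of `F` and an `A₂`-stable model of `G`, and let
`J < I` satisfy `(F ∧ G)^I`. By `A₁`-stability, every atom of `A₁` lost in `J` depends, through
lost atoms, on a lost atom outside `A₁`, hence in `A₂`; symmetrically from `A₂` to `A₁`.
Chaining these dependencies gives an infinite walk of the dependency graph that visits both
`A₁` and `A₂` infinitely often, contradicting infinite separability.
-/

section Graph

variable {V : Type*} {E : V → V → Prop}

theorem Relation.TransGen.exists_path {a b : V} (h : Relation.TransGen E a b) :
    ∃ (n : ℕ) (p : ℕ → V), p 0 = a ∧ p (n + 1) = b ∧ ∀ i ≤ n, E (p i) (p (i + 1)) := by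
  induction h using Relation.TransGen.head_induction_on with
  | single hab => exact ⟨0, fun i => if i = 0 then _ else _, rfl, rfl, by simpa using hab⟩
  | @head a c hac _ ih =>
    obtain ⟨n, p, hp0, hpn, hp⟩ := ih
    refine ⟨n + 1, fun i => if i = 0 then a else p (i - 1), rfl, by simpa using hpn, ?_⟩
    rintro (_ | i) hi
    · simpa [hp0] using hac
    · simpa using hp i (by omega)

/-- The walk runs through the paths `p k` one after the other; its state `(k, j)` says it is at
position `j` of the `k`-th path. -/
theorem exists_isInfWalk_through (a : ℕ → V) (h : ∀ k, Relation.TransGen E (a k) (a (k + 1))) :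
    ∃ (w : ℕ → V) (φ : ℕ → ℕ), IsInfWalk E w ∧ StrictMono φ ∧ ∀ k, w (φ k) = a k := by
  choose n p hp0 hpn hp using fun k => (h k).exists_path
  let next : ℕ × ℕ → ℕ × ℕ := fun s => if s.2 < n s.1 then (s.1, s.2 + 1) else (s.1 + 1, 0)
  let s : ℕ → ℕ × ℕ := fun m => next^[m] (0, 0)
  have hs : ∀ m, s (m + 1) = next (s m) := fun m => Function.iterate_succ_apply' _ _ _
  have hinv : ∀ m, (s m).2 ≤ n (s m).1 := by
    intro m
    induction m with
    | zero => simp [s]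
    | succ m ih =>
      rw [hs]
      simp only [next]
      split_ifs with hlt <;> simp [hlt]
  have hstep : ∀ m, p (s (m + 1)).1 (s (m + 1)).2 = p (s m).1 ((s m).2 + 1) := by
    intro m
    rw [hs]
    simp only [next]
    split_ifs with hlt
    · rfl
    · rw [hp0, ← hpn, show (s m).2 = n (s m).1 by have := hinv m; omega]
  have hrun : ∀ m k, s m = (k, 0) → ∀ j ≤ n k, s (m + j) = (k, j) := by
    intro m k hm j hj
    induction j with
    | zero => exact hm
    | succ j ih => rw [← add_assoc, hs, ih (by omega)]; simp [next, show j < n k by omega]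
  let φ : ℕ → ℕ := fun k => ∑ i ∈ Finset.range k, (n i + 1)
  have hφ : ∀ k, s (φ k) = (k, 0) := by
    intro k
    induction k with
    | zero => rfl
    | succ k ih =>
      rw [show φ (k + 1) = φ k + n k + 1 from Finset.sum_range_succ _ _, hs,
        hrun _ _ ih _ le_rfl]
      simp [next]
  refine ⟨fun m => p (s m).1 (s m).2, φ, fun m => ?_, strictMono_nat_of_lt_succ fun k => ?_,
    fun k => by simp [hφ, hp0]⟩
  · show E (p (s m).1 (s m).2) (p (s (m + 1)).1 (s (m + 1)).2)
    rw [hstep]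
    exact hp _ _ (hinv m)
  · simp [φ, Finset.sum_range_succ]

theorem InfSeparable.eq_empty_of_forall_exists_transGen {P1 P2 X : Set V}
    (hsep : InfSeparable E P1 P2) (hX : X ⊆ P1 ∪ P2)
    (hcross : ∀ v ∈ X, ∃ u ∈ X, Relation.TransGen E v u ∧ (v ∈ P1 ↔ u ∉ P1)) : X = ∅ := by
  by_contra hne
  obtain ⟨v0, hv0⟩ := Set.nonempty_iff_ne_empty.2 hne
  have : Nonempty V := ⟨v0⟩
  choose! f hfX hfE hfP1 using hcross
  let a : ℕ → V := fun k => f^[k] v0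
  have ha : ∀ k, a (k + 1) = f (a k) := fun k => Function.iterate_succ_apply' _ _ _
  have haX : ∀ k, a k ∈ X := by
    intro k
    induction k with
    | zero => exact hv0
    | succ k ih => rw [ha]; exact hfX _ ih
  obtain ⟨w, φ, hw, hφ, hwa⟩ :=
    exists_isInfWalk_through a fun k => ha k ▸ hfE _ (haX k)
  have hinf : ∀ P : Set V, (∀ k, a k ∈ P ∨ a (k + 1) ∈ P) → {i | w i ∈ P}.Infinite := by
    refine fun P hP => Set.infinite_of_forall_exists_gt fun k => ?_
    rcases hP (k + 1) with h | h
    · exact ⟨φ (k + 1), by simpa [hwa] using h, (Nat.lt_succ_self k).trans_le hφ.le_apply⟩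
    · exact ⟨φ (k + 2), by simpa [hwa] using h, (by omega : k < k + 2).trans_le hφ.le_apply⟩
  have halt : ∀ k, a k ∈ P1 ↔ a (k + 1) ∉ P1 := fun k => ha k ▸ hfP1 _ (haX k)
  have hP2 : ∀ k, a k ∉ P1 → a k ∈ P2 := fun k => (hX (haX k)).resolve_left
  rcases hsep w hw with hfin | hfin
  · exact hinf P1 (fun k => by have := halt k; tauto) hfin
  · exact hinf P2 (fun k => by have := halt k; have := hP2 k; have := hP2 (k + 1); tauto) hfin

end Graph

namespace Formula

variable {σ : Type} {I J K : Set σ}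

theorem not_sat_bot : ¬ Sat I (bot : Formula σ) := fun ⟨e, _⟩ => e.elim

theorem not_sat_of_isBot : ∀ {H : Formula σ}, IsBot H → ¬ Sat I H
  | .disj _ _, hH, ⟨i, _⟩ => hH.false i

theorem sat_reduct_self_iff : ∀ {F : Formula σ}, Sat I (reduct I F) ↔ Sat I F
  | .atom p => by by_cases h : p ∈ I <;> simp [reduct, Sat, h, not_sat_bot]
  | .conj _ f => forall_congr' fun i => sat_reduct_self_iff (F := f i)
  | .disj _ f => exists_congr fun i => sat_reduct_self_iff (F := f i)
  | .imp F G => by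
    by_cases h : Sat I (imp F G)
    · rw [reduct, if_pos h]
      exact imp_congr sat_reduct_self_iff sat_reduct_self_iff
    · simp only [reduct, if_neg h]
      exact iff_of_false not_sat_bot h

theorem sat_reduct_self_of_sat_reduct : ∀ {F : Formula σ}, Sat J (reduct I F) → Sat I (reduct I F)
  | .atom p, hJ => by
    by_cases h : p ∈ I
    · simp [reduct, h, Sat]
    · simp [reduct, h, not_sat_bot] at hJ
  | .conj _ f, hJ => fun i => sat_reduct_self_of_sat_reduct (F := f i) (hJ i)
  | .disj _ f, ⟨i, hi⟩ => ⟨i, sat_reduct_self_of_sat_reduct (F := f i) hi⟩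
  | .imp F G, hJ => by
    by_cases h : Sat I (imp F G)
    · simp only [reduct, if_pos h] at hJ ⊢
      exact fun hF => sat_reduct_self_iff.2 (h (sat_reduct_self_iff.1 hF))
    · simp [reduct, h, not_sat_bot] at hJ

theorem sat_reduct_of_inter_spos_subset :
    ∀ {F : Formula σ}, Sat I (reduct I F) → I ∩ spos F ⊆ J → Sat J (reduct I F)
  | .atom p, hI, hJ => by
    by_cases h : p ∈ I
    · simp only [reduct, if_pos h, Sat] at hI ⊢
      exact hJ ⟨h, rfl⟩
    · simp [reduct, h, not_sat_bot] at hI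
  | .conj _ f, hI, hJ => fun i =>
    sat_reduct_of_inter_spos_subset (hI i) fun p hp => hJ ⟨hp.1, Set.mem_iUnion.2 ⟨i, hp.2⟩⟩
  | .disj _ f, ⟨i, hi⟩, hJ =>
    ⟨i, sat_reduct_of_inter_spos_subset hi fun p hp => hJ ⟨hp.1, Set.mem_iUnion.2 ⟨i, hp.2⟩⟩⟩
  | .imp F G, hI, hJ => by
    by_cases h : Sat I (imp F G)
    · simp only [reduct, if_pos h] at hI ⊢
      exact fun hF => sat_reduct_of_inter_spos_subset (hI (sat_reduct_self_of_sat_reduct hF)) hJ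
    · simp [reduct, h, not_sat_bot] at hI

theorem sat_reduct_of_pnn_nnn : ∀ {F : Formula σ} {J K : Set σ}, Sat J (reduct I F) →
    J ∩ pnn F ⊆ K → K ∩ nnn F ⊆ J → Sat K (reduct I F)
  | .atom p, J, K, hJ, hpnn, _ => by
    by_cases h : p ∈ I
    · simp only [reduct, if_pos h, Sat] at hJ ⊢
      exact hpnn ⟨hJ, by simp [pnn]⟩
    · simp [reduct, h, not_sat_bot] at hJ
  | .conj _ f, J, K, hJ, hpnn, hnnn => fun i => sat_reduct_of_pnn_nnn (hJ i)
      (fun p hp => hpnn ⟨hp.1, by simp only [pnn]; exact Set.mem_iUnion.2 ⟨i, hp.2⟩⟩)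
      (fun p hp => hnnn ⟨hp.1, by simp only [nnn]; exact Set.mem_iUnion.2 ⟨i, hp.2⟩⟩)
  | .disj _ f, J, K, ⟨i, hi⟩, hpnn, hnnn => ⟨i, sat_reduct_of_pnn_nnn hi
      (fun p hp => hpnn ⟨hp.1, by simp only [pnn]; exact Set.mem_iUnion.2 ⟨i, hp.2⟩⟩)
      (fun p hp => hnnn ⟨hp.1, by simp only [nnn]; exact Set.mem_iUnion.2 ⟨i, hp.2⟩⟩)⟩
  | .imp F G, J, K, hJ, hpnn, hnnn => by
    by_cases h : Sat I (imp F G)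
    · simp only [reduct, if_pos h] at hJ ⊢
      intro hKF
      by_cases hG : IsBot G
      · exact absurd (h (sat_reduct_self_iff.1 (sat_reduct_self_of_sat_reduct hKF)))
          (not_sat_of_isBot hG)
      simp only [pnn, nnn, if_neg hG] at hpnn hnnn
      have hJF : Sat J (reduct I F) := sat_reduct_of_pnn_nnn hKF
        (fun p hp => hnnn ⟨hp.1, Or.inl hp.2⟩) (fun p hp => hpnn ⟨hp.1, Or.inl hp.2⟩)
      exact sat_reduct_of_pnn_nnn (hJ hJF)
        (fun p hp => hpnn ⟨hp.1, Or.inr hp.2⟩) (fun p hp => hnnn ⟨hp.1, Or.inr hp.2⟩)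
    · simp [reduct, h, not_sat_bot] at hJ

theorem exists_rule_of_sat_reduct_of_not_sat_reduct : ∀ {F : Formula σ}, J ⊆ K →
    Sat J (reduct I F) → ¬ Sat K (reduct I F) →
    ∃ R ∈ rules F, (pnn R.1 ∩ (K \ J)).Nonempty ∧ (spos R.2 ∩ (I \ K)).Nonempty
  | .atom p, hJK, hJ, hK => by
    by_cases h : p ∈ I
    · simp only [reduct, if_pos h, Sat] at hJ hK
      exact absurd (hJK hJ) hK
    · simp [reduct, h, not_sat_bot] at hJ
  | .conj _ f, hJK, hJ, hK => by
    obtain ⟨i, hi⟩ := not_forall.1 hK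
    obtain ⟨R, hR, hR'⟩ := exists_rule_of_sat_reduct_of_not_sat_reduct hJK (hJ i) hi
    exact ⟨R, Set.mem_iUnion.2 ⟨i, hR⟩, hR'⟩
  | .disj _ f, hJK, ⟨i, hi⟩, hK => by
    obtain ⟨R, hR, hR'⟩ :=
      exists_rule_of_sat_reduct_of_not_sat_reduct hJK hi fun hKi => hK ⟨i, hKi⟩
    exact ⟨R, Set.mem_iUnion.2 ⟨i, hR⟩, hR'⟩
  | .imp F G, hJK, hJ, hK => by
    by_cases h : Sat I (imp F G)
    · rw [reduct, if_pos h] at hJ hK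
      obtain ⟨hKF, hKG⟩ := Classical.not_imp.1 hK
      by_cases hJF : Sat J (reduct I F)
      · obtain ⟨R, hR, hR'⟩ := exists_rule_of_sat_reduct_of_not_sat_reduct hJK (hJ hJF) hKG
        exact ⟨R, Set.mem_insert_of_mem _ hR, hR'⟩
      refine ⟨(F, G), Set.mem_insert _ _, ?_, ?_⟩
      · by_contra hq
        refine hJF (sat_reduct_of_pnn_nnn hKF (fun p hp => ?_) fun p hp => hJK hp.1)
        by_contra hpJ
        exact hq ⟨p, hp.2, hp.1, hpJ⟩
      · by_contra hp
        have hIG : Sat I (reduct I G) :=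
          sat_reduct_self_iff.2 (h (sat_reduct_self_iff.1 (sat_reduct_self_of_sat_reduct hKF)))
        refine hKG (sat_reduct_of_inter_spos_subset hIG fun p hp' => ?_)
        by_contra hpK
        exact hp ⟨p, hp'.2, hp'.1, hpK⟩
    · simp [reduct, h, not_sat_bot] at hJ

variable {F G Φ Ψ : Formula σ} {A B : Set σ}

theorem sat_reduct_and : Sat J (reduct I (F.and G)) ↔ Sat J (reduct I F) ∧ Sat J (reduct I G) :=
  ⟨fun h => ⟨by simpa using h true, by simpa using h false⟩,
    fun h b => by cases b; exacts [by simpa using h.2, by simpa using h.1]⟩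

theorem rules_and : rules (F.and G) = rules F ∪ rules G := by
  ext R
  simp [Formula.and, rules, or_comm]

theorem dgEdge_mono (hr : rules Φ ⊆ rules Ψ) (hA : A ⊆ B) : DGEdge Φ A ≤ DGEdge Ψ B :=
  fun _ _ ⟨hp, hq, R, hR, hR'⟩ => ⟨hA hp, hA hq, R, hr hR, hR'⟩

theorem aStable_and_comm : AStable A I (F.and G) ↔ AStable A I (G.and F) := by
  simp only [AStable, sat_reduct_and, and_comm]

theorem AStable.of_and_left (h : AStable A I (F.and G)) (hBA : B ⊆ A)
    (hG : Disjoint B (spos G)) : AStable B I F := by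
  obtain ⟨hIF, hIG⟩ := sat_reduct_and.1 h.1
  refine ⟨hIF, fun J hJI hB hJF => h.2 J hJI (hB.trans hBA) (sat_reduct_and.2 ⟨hJF, ?_⟩)⟩
  refine sat_reduct_of_inter_spos_subset hIG fun p ⟨hpI, hpG⟩ => ?_
  by_contra hpJ
  exact hG.notMem_of_mem_left (hB ⟨hpI, hpJ⟩) hpG

theorem AStable.of_and_right (h : AStable A I (F.and G)) (hBA : B ⊆ A)
    (hF : Disjoint B (spos F)) : AStable B I G :=
  (aStable_and_comm.1 h).of_and_left hBA hF

/-- Otherwise the set `Y` of atoms reachable from `v` lies in `B`, and removing `Y` from `I`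
keeps a model of `Φ^I`: a rule that fails in `I \ Y` would yield an edge leaving `Y`. -/
theorem AStable.exists_transGen_dgEdge (h : AStable B I Φ) (hJI : J ⊆ I)
    (hJ : Sat J (reduct I Φ)) {v : σ} (hv : v ∈ I \ J) (hvB : v ∈ B) :
    ∃ q ∈ I \ J, q ∉ B ∧ Relation.TransGen (DGEdge Φ (I \ J)) v q := by
  by_contra! hno
  set Y := {p | Relation.ReflTransGen (DGEdge Φ (I \ J)) v p}
  have hYIJ : Y ⊆ I \ J := fun p hp => by
    induction hp with
    | refl => exact hv
    | tail _ hpq => exact hpq.2.1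
  have hYB : Y ⊆ B := fun p hp => by
    rcases Relation.reflTransGen_iff_eq_or_transGen.1 hp with rfl | hvp
    · exact hvB
    · by_contra hpB
      exact hno p (hYIJ hp) hpB hvp
  have hvY : v ∈ Y := Relation.ReflTransGen.refl
  have hK : ¬ Sat (I \ Y) (reduct I Φ) := fun hK => by
    have hIY : I \ (I \ Y) = Y := Set.sdiff_sdiff_cancel_left fun p hp => (hYIJ hp).1
    have hYempty : I \ Y = I := h.2 _ Set.sdiff_subset (by rw [hIY]; exact hYB) hK
    have hvIY : v ∈ I \ Y := by rw [hYempty]; exact hv.1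
    exact hvIY.2 hvY
  have hJK : J ⊆ I \ Y := fun p hpJ => ⟨hJI hpJ, fun hpY => (hYIJ hpY).2 hpJ⟩
  obtain ⟨R, hR, ⟨q, hqR, hqK, hqJ⟩, ⟨p, hpR, hpI, hpK⟩⟩ :=
    exists_rule_of_sat_reduct_of_not_sat_reduct hJK hJ hK
  have hpY : p ∈ Y := not_not.1 fun hpY => hpK ⟨hpI, hpY⟩
  have hpq : DGEdge Φ (I \ J) p q := ⟨hYIJ hpY, ⟨hqK.1, hqJ⟩, R, hR, hpR, hqR⟩
  exact hqK.2 (hpY.tail hpq)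

theorem AStable.and_of_infSeparable {A1 A2 : Set σ}
    (hsep : InfSeparable (DGEdge (F.and G) (A1 ∪ A2)) A1 A2)
    (hF : AStable A1 I F) (hG : AStable A2 I G) : AStable (A1 ∪ A2) I (F.and G) := by
  refine ⟨sat_reduct_and.2 ⟨hF.1, hG.1⟩, fun J hJI hA hJ => ?_⟩
  obtain ⟨hJF, hJG⟩ := sat_reduct_and.1 hJ
  have hlift : ∀ {Φ : Formula σ} {v u : σ}, rules Φ ⊆ rules (F.and G) →
      Relation.TransGen (DGEdge Φ (I \ J)) v u →
      Relation.TransGen (DGEdge (F.and G) (A1 ∪ A2)) v u :=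
    fun hr => Relation.TransGen.mono (dgEdge_mono hr hA) _ _
  have hcross : ∀ v ∈ I \ J, ∃ u ∈ I \ J,
      Relation.TransGen (DGEdge (F.and G) (A1 ∪ A2)) v u ∧ (v ∈ A1 ↔ u ∉ A1) := by
    intro v hv
    by_cases hv1 : v ∈ A1
    · obtain ⟨u, hu, hu1, hvu⟩ := hF.exists_transGen_dgEdge hJI hJF hv hv1
      exact ⟨u, hu, hlift (rules_and ▸ Set.subset_union_left) hvu, iff_of_true hv1 hu1⟩
    · obtain ⟨u, hu, hu2, hvu⟩ :=
        hG.exists_transGen_dgEdge hJI hJG hv ((hA hv).resolve_left hv1)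
      exact ⟨u, hu, hlift (rules_and ▸ Set.subset_union_right) hvu,
        iff_of_false hv1 (not_not.2 ((hA hu).resolve_right hu2))⟩
  exact hJI.antisymm (Set.sdiff_eq_empty.1 (hsep.eq_empty_of_forall_exists_transGen hA hcross))

end Formula

/-- Infinitary Splitting Theorem: if `{A₁, A₂}` is infinitely
separable on `DG_{A₁∪A₂}[F ∧ G]`, `A₂` is disjoint from `P(F)` and `A₁` from
`P(G)`, then `I` is an `(A₁ ∪ A₂)`-stable model of `F ∧ G` iff it is an
`A₁`-stable model of `F` and an `A₂`-stable model of `G`. -/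
theorem infinitary_splitting_theorem {σ : Type} (F G : Formula σ)
    (A1 A2 : Set σ) (hdisj : Disjoint A1 A2)
    (hsep : InfSeparable (Formula.DGEdge (Formula.and F G) (A1 ∪ A2)) A1 A2)
    (hF : Disjoint A2 (Formula.spos F)) (hG : Disjoint A1 (Formula.spos G))
    (I : Set σ) :
    Formula.AStable (A1 ∪ A2) I (Formula.and F G) ↔
      Formula.AStable A1 I F ∧ Formula.AStable A2 I G :=
  ⟨fun h => ⟨h.of_and_left Set.subset_union_left hG, h.of_and_right Set.subset_union_right hF⟩,
    fun ⟨hIF, hIG⟩ => hIF.and_of_infSeparable hsep hIG⟩
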